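/- arXiv:2311.02325 — 10 statements merged into one kernel-verified Lean document; each statement's English description precedes it below -/
import Mathlib

section
/- Let (X, μ) be a supratopological space. Then the collection B = {(G × G) ∪ ((X \ G) × X) : G ∈ μ} forms a base for a generalized quasi-uniformity U_μ on X, and the generalized topology induced by U_μ equals μ. -/
open Set

/-- A generalized quasi-uniformity (g-quasi uniformity) on `X`. -/
def IsGQU {X : Type} (U : Set (Set (X × X))) : Prop :=
  U.Nonempty ∧
  (∀ A ∈ U, ∀ x : X, (x, x) ∈ A) ∧
  (∀ A ∈ U, ∀ B : Set (X × X), A ⊆ B → B ∈ U) ∧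
  (∀ A ∈ U, ∃ V ∈ U, SetRel.comp V V ⊆ A)

/-- `B` is a base for the g-quasi uniformity `U`. -/
def IsGQUBaseOf {X : Type} (U B : Set (Set (X × X))) : Prop :=
  B.Nonempty ∧ B ⊆ U ∧ ∀ A ∈ U, ∃ b ∈ B, b ⊆ A

/-- The collection of all supersets of members of `B`. -/
def genGQU {X : Type} (B : Set (Set (X × X))) : Set (Set (X × X)) :=
  {A | ∃ b ∈ B, b ⊆ A}

/-- The generalized topology (supratopology) induced by a g-quasi uniformity. -/
def muU {X : Type} (U : Set (Set (X × X))) : Set (Set X) :=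
  {G | ∀ x ∈ G, ∃ A ∈ U, {y | (x, y) ∈ A} ⊆ G}

/-- A strong generalized topology (supratopology). -/
def IsSupra {X : Type} (μ : Set (Set X)) : Prop :=
  ∅ ∈ μ ∧ Set.univ ∈ μ ∧ ∀ S ⊆ μ, ⋃₀ S ∈ μ

/-- g-quasi uniform continuity. -/
def GQUCont {X Y : Type} (U : Set (Set (X × X))) (V : Set (Set (Y × Y)))
    (f : X → Y) : Prop :=
  ∀ A ∈ V, Prod.map f f ⁻¹' A ∈ U

/-- The Pervin-type base associated to a supratopology. -/
def pervinBase {X : Type} (μ : Set (Set X)) : Set (Set (X × X)) :=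
  (fun G => G ×ˢ G ∪ Gᶜ ×ˢ (Set.univ : Set X)) '' μ

/-- A Cauchy net. -/
def CauchyNet {X D : Type} [Preorder D] (U : Set (Set (X × X))) (S : D → X) : Prop :=
  ∀ A ∈ U, ∃ m : D, ∀ p q : D, m ≤ p → m ≤ q → (S p, S q) ∈ A

/-- A pseudo-Cauchy net. -/
def PseudoCauchyNet {X D : Type} [Preorder D] (U : Set (Set (X × X))) (S : D → X) : Prop :=
  ∀ A ∈ U, ∀ p : D, ∃ m n : D, p ≤ m ∧ p ≤ n ∧ m ≠ n ∧ (S m, S n) ∈ A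

/-- A net has pairwise distinct terms. -/
def DistinctTerms {X D : Type} (S : D → X) : Prop :=
  ∀ m n : D, m ≠ n → S m ≠ S n

/-- `c` is a cluster point of the net `S` w.r.t. the induced supratopology. -/
def ClusterPtNet {X D : Type} [Preorder D] (U : Set (Set (X × X))) (S : D → X) (c : X) : Prop :=
  ∀ G ∈ muU U, c ∈ G → ∀ n : D, ∃ m : D, n ≤ m ∧ S m ∈ G

/-- The net `S` converges to `c` w.r.t. the induced supratopology. -/
def ConvNet {X D : Type} [Preorder D] (U : Set (Set (X × X))) (S : D → X) (c : X) : Prop :=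
  ∀ G ∈ muU U, c ∈ G → ∃ m : D, ∀ n : D, m ≤ n → S n ∈ G

/-- A G-Cauchy sequence. -/
def GCauchySeq {X : Type} (U : Set (Set (X × X))) (x : ℕ → X) : Prop :=
  ∀ A ∈ U, ∃ k : ℕ, ∀ n ≥ k, (x n, x (n + 1)) ∈ A

/-- Completeness: every Cauchy net converges. -/
def CompleteGQU {X : Type} (U : Set (Set (X × X))) : Prop :=
  ∀ (D : Type) [Preorder D] [IsDirected D (· ≤ ·)] [Nonempty D],
    ∀ S : D → X, CauchyNet U S → ∃ c : X, ConvNet U S c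

/-- Strongly Lebesgue: every pseudo-Cauchy net has a cluster point. -/
def StronglyLebesgueGQU {X : Type} (U : Set (Set (X × X))) : Prop :=
  ∀ (D : Type) [Preorder D] [IsDirected D (· ≤ ·)] [Nonempty D],
    ∀ S : D → X, PseudoCauchyNet U S → ∃ c : X, ClusterPtNet U S c

/-- Lebesgue: every pseudo-Cauchy net with pairwise distinct terms has a cluster point. -/
def LebesgueGQU {X : Type} (U : Set (Set (X × X))) : Prop :=
  ∀ (D : Type) [Preorder D] [IsDirected D (· ≤ ·)] [Nonempty D],
    ∀ S : D → X, PseudoCauchyNet U S → DistinctTerms S → ∃ c : X, ClusterPtNet U S c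

/-- Sequentially Lebesgue. -/
def SeqLebesgueGQU {X : Type} (U : Set (Set (X × X))) : Prop :=
  ∀ x : ℕ → X, PseudoCauchyNet U x → DistinctTerms x → ∃ c : X, ClusterPtNet U x c

/-- G-complete: every G-Cauchy sequence converges. -/
def GCompleteGQU {X : Type} (U : Set (Set (X × X))) : Prop :=
  ∀ x : ℕ → X, GCauchySeq U x → ∃ c : X, ConvNet U x c

/-- Weak G-complete: every G-Cauchy sequence has a cluster point. -/
def WeakGCompleteGQU {X : Type} (U : Set (Set (X × X))) : Prop :=
  ∀ x : ℕ → X, GCauchySeq U x → ∃ c : X, ClusterPtNet U x c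

/-- Compactness of the induced supratopology. -/
def CompactGQU {X : Type} (U : Set (Set (X × X))) : Prop :=
  ∀ C ⊆ muU U, ⋃₀ C = Set.univ →
    ∃ F ⊆ C, F.Finite ∧ ⋃₀ F = Set.univ

/-- The standard base of the product g-quasi uniformity. -/
def piBase {I : Type} {X : I → Type} (U : ∀ i, Set (Set (X i × X i))) :
    Set (Set ((∀ i, X i) × (∀ i, X i))) :=
  {S | ∃ i : I, ∃ A ∈ U i,
    S = Prod.map (fun x : ∀ j, X j => x i) (fun x : ∀ j, X j => x i) ⁻¹' A}

/-- The product g-quasi uniformity. -/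
def piGQU {I : Type} {X : I → Type} (U : ∀ i, Set (Set (X i × X i))) :
    Set (Set ((∀ i, X i) × (∀ i, X i))) :=
  genGQU (piBase U)

/-!
The Pervin entourage `G ×ˢ G ∪ Gᶜ ×ˢ univ` is the preorder `{(x, y) | x ∈ G → y ∈ G}`, so it
contains the diagonal and `V = B` already satisfies `V ○ V ⊆ B`. Its ball around `x` is `G` when
`x ∈ G` and `univ` otherwise; both lie in `μ`, so every set open for the induced generalized topology
is a union of members of `μ`, and conversely each `G ∈ μ` is the ball of its own entourage.
-/

section

variable {X : Type}

theorem IsSupra.mem_of_forall_exists_subset {μ : Set (Set X)} (hμ : IsSupra μ) {G : Set X}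
    (h : ∀ x ∈ G, ∃ S ∈ μ, x ∈ S ∧ S ⊆ G) : G ∈ μ := by
  have hG : ⋃₀ {S ∈ μ | S ⊆ G} = G := by
    refine subset_antisymm (sUnion_subset fun S hS => hS.2) fun x hx => ?_
    obtain ⟨S, hSμ, hxS, hSG⟩ := h x hx
    exact ⟨S, ⟨hSμ, hSG⟩, hxS⟩
  exact hG ▸ hμ.2.2 _ fun S hS => hS.1

theorem muU_genGQU (B : Set (Set (X × X))) : muU (genGQU B) = muU B := by
  ext G
  refine ⟨fun hG x hx => ?_, fun hG x hx => ?_⟩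
  · obtain ⟨A, ⟨b, hb, hbA⟩, hAG⟩ := hG x hx
    exact ⟨b, hb, fun y hy => hAG (hbA hy)⟩
  · obtain ⟨b, hb, hbG⟩ := hG x hx
    exact ⟨b, ⟨b, hb, subset_rfl⟩, hbG⟩

def pervinRel (G : Set X) : SetRel X X :=
  {p | p.1 ∈ G → p.2 ∈ G}

theorem pervinRel_eq (G : Set X) : pervinRel G = G ×ˢ G ∪ Gᶜ ×ˢ univ := by
  ext ⟨x, y⟩
  by_cases hx : x ∈ G <;> simp [pervinRel, hx]

theorem pervinBase_eq_image (μ : Set (Set X)) : pervinBase μ = pervinRel '' μ := by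
  simp only [pervinBase, pervinRel_eq]

instance (G : Set X) : (pervinRel G).IsRefl where
  refl _ := id

instance (G : Set X) : (pervinRel G).IsTrans where
  trans _ _ _ hxy hyz := hyz ∘ hxy

theorem IsSupra.setOf_imp_mem {μ : Set (Set X)} (hμ : IsSupra μ) {G : Set X} (hG : G ∈ μ)
    (x : X) : {y | x ∈ G → y ∈ G} ∈ μ := by
  by_cases hx : x ∈ G
  · simpa [hx] using hG
  · simpa [hx] using hμ.2.1

theorem muU_pervinBase {μ : Set (Set X)} (hμ : IsSupra μ) : muU (pervinBase μ) = μ := by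
  rw [pervinBase_eq_image]
  ext G
  refine ⟨fun hG => hμ.mem_of_forall_exists_subset fun x hx => ?_, fun hG x hx => ?_⟩
  · obtain ⟨_, ⟨H, hH, rfl⟩, hHG⟩ := hG x hx
    exact ⟨_, hμ.setOf_imp_mem hH x, id, hHG⟩
  · exact ⟨pervinRel G, mem_image_of_mem _ hG, fun y hy => hy hx⟩

end

theorem stmt_2_general {X : Type} (μ : Set (Set X)) (hμ : IsSupra μ) :
    ((pervinBase μ).Nonempty ∧
      (∀ b ∈ pervinBase μ, ∀ x : X, (x, x) ∈ b) ∧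
      (∀ b ∈ pervinBase μ, ∃ V ∈ pervinBase μ, SetRel.comp V V ⊆ b)) ∧
    muU (genGQU (pervinBase μ)) = μ := by
  rw [muU_genGQU, muU_pervinBase hμ, pervinBase_eq_image]
  refine ⟨⟨⟨_, mem_image_of_mem _ hμ.1⟩, ?_, ?_⟩, rfl⟩
  · rintro _ ⟨G, -, rfl⟩ x
    exact SetRel.refl _ x
  · rintro _ ⟨G, hG, rfl⟩
    exact ⟨_, mem_image_of_mem _ hG, SetRel.comp_subset_self⟩

theorem stmt_2 {X : Type} [Nonempty X] (μ : Set (Set X)) (hμ : IsSupra μ) :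
    ((pervinBase μ).Nonempty ∧
      (∀ b ∈ pervinBase μ, ∀ x : X, (x, x) ∈ b) ∧
      (∀ b ∈ pervinBase μ, ∃ V ∈ pervinBase μ, SetRel.comp V V ⊆ b)) ∧
    muU (genGQU (pervinBase μ)) = μ :=
  stmt_2_general μ hμ
end

section
/- Let (X, μ) and (X', μ') be supratopological spaces. If f : X → X' is generalized continuous (i.e., f⁻¹(G) ∈ μ for all G ∈ μ'), then f : (X, U_μ) → (X', U_{μ'}) is g-quasi uniform continuous, where U_μ and U_{μ'} denote the Pervin-type generalized quasi-uniformities generated by the bases {(G × G) ∪ ((X \ G) × X) : G ∈ μ} and {(G × G) ∪ ((X' \ G) × X') : G ∈ μ'} respectively. -/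
open Set

theorem preimage_prodMap_pervin {X Y : Type} (f : X → Y) (G : Set Y) :
    Prod.map f f ⁻¹' (G ×ˢ G ∪ Gᶜ ×ˢ univ) =
      (f ⁻¹' G) ×ˢ (f ⁻¹' G) ∪ (f ⁻¹' G)ᶜ ×ˢ univ := by
  ext ⟨x, y⟩
  simp

theorem preimage_mem_pervinBase {X Y : Type} {μ : Set (Set X)} {ν : Set (Set Y)} {f : X → Y}
    (hf : ∀ G ∈ ν, f ⁻¹' G ∈ μ) {b : Set (Y × Y)} (hb : b ∈ pervinBase ν) :
    Prod.map f f ⁻¹' b ∈ pervinBase μ := by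
  obtain ⟨G, hG, rfl⟩ := hb
  exact ⟨f ⁻¹' G, hf G hG, (preimage_prodMap_pervin f G).symm⟩

theorem gquCont_genGQU_of_preimage_mem {X Y : Type} {B : Set (Set (X × X))}
    {B' : Set (Set (Y × Y))} {f : X → Y} (h : ∀ b ∈ B', Prod.map f f ⁻¹' b ∈ B) :
    GQUCont (genGQU B) (genGQU B') f := by
  rintro A ⟨b, hb, hbA⟩
  exact ⟨_, h b hb, preimage_mono hbA⟩

theorem stmt_3_general {X X' : Type}
    (μ : Set (Set X)) (μ' : Set (Set X'))
    (f : X → X') (hf : ∀ G ∈ μ', f ⁻¹' G ∈ μ) :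
    GQUCont (genGQU (pervinBase μ)) (genGQU (pervinBase μ')) f :=
  gquCont_genGQU_of_preimage_mem fun _ => preimage_mem_pervinBase hf

theorem stmt_3 {X X' : Type} [Nonempty X] [Nonempty X']
    (μ : Set (Set X)) (μ' : Set (Set X')) (hμ : IsSupra μ) (hμ' : IsSupra μ')
    (f : X → X') (hf : ∀ G ∈ μ', f ⁻¹' G ∈ μ) :
    GQUCont (genGQU (pervinBase μ)) (genGQU (pervinBase μ')) f :=
  stmt_3_general μ μ' f hf
end

section
/- Let (X, U) be the product generalized quasi-uniform space of a family {(X_i, U_i) : i ∈ I}. Then (X, U) is complete if and only if each (X_i, U_i) is complete. -/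
open Set

/- Completeness is checked coordinatewise: a net in the product is Cauchy, resp. convergent, exactly
when each coordinate net is.  A Cauchy net in one factor becomes a Cauchy net in the product by
freezing the other coordinates at fixed points. -/

section Nets

variable {X Y D : Type} [Preorder D] {U : Set (Set (X × X))} {V : Set (Set (Y × Y))}

lemma CauchyNet.map {f : X → Y} (hf : GQUCont U V f) {S : D → X} (hS : CauchyNet U S) :
    CauchyNet V (f ∘ S) :=
  fun A hA => hS _ (hf A hA)

lemma ConvNet.map {f : X → Y} (hf : GQUCont U V f) {S : D → X} {c : X} (hS : ConvNet U S c) :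
    ConvNet V (f ∘ S) (f c) := by
  intro G hG hcG
  have hpre : f ⁻¹' G ∈ muU U := by
    intro x hx
    obtain ⟨A, hA, hAG⟩ := hG (f x) hx
    exact ⟨_, hf A hA, fun y hy => hAG hy⟩
  exact hS _ hpre hcG

lemma cauchyNet_const (hU : IsGQU U) [Nonempty D] (x : X) : CauchyNet U (fun _ : D => x) :=
  fun A hA => ⟨Classical.arbitrary D, fun _ _ _ _ => hU.2.1 A hA x⟩

lemma setOf_exists_subset_mem_muU (hU : IsGQU U) (G : Set X) :
    {x | ∃ A ∈ U, {y | (x, y) ∈ A} ⊆ G} ∈ muU U := by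
  rintro x ⟨A, hA, hAG⟩
  obtain ⟨W, hW, hWA⟩ := hU.2.2.2 A hA
  exact ⟨W, hW, fun y hy => ⟨W, hW, fun z hz => hAG (hWA ⟨y, hy, hz⟩)⟩⟩

lemma convNet_iff_forall_mem (hU : IsGQU U) {S : D → X} {c : X} :
    ConvNet U S c ↔ ∀ A ∈ U, ∃ m : D, ∀ n : D, m ≤ n → (c, S n) ∈ A := by
  constructor
  · intro hS A hA
    obtain ⟨m, hm⟩ := hS _ (setOf_exists_subset_mem_muU hU {y | (c, y) ∈ A}) ⟨A, hA, subset_rfl⟩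
    refine ⟨m, fun n hn => ?_⟩
    obtain ⟨W, hW, hWA⟩ := hm n hn
    exact hWA (hU.2.1 W hW (S n))
  · intro hS G hG hcG
    obtain ⟨A, hA, hAG⟩ := hG c hcG
    obtain ⟨m, hm⟩ := hS A hA
    exact ⟨m, fun n hn => hAG (hm n hn)⟩

end Nets

section Pi

variable {I D : Type} [Preorder D] {X : I → Type} {U : ∀ i, Set (Set (X i × X i))}

lemma gquCont_piGQU_apply (i : I) : GQUCont (piGQU U) (U i) (fun x : ∀ j, X j => x i) :=
  fun A hA => ⟨_, ⟨i, A, hA, rfl⟩, subset_rfl⟩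

lemma cauchyNet_piGQU_iff {S : D → ∀ i, X i} :
    CauchyNet (piGQU U) S ↔ ∀ i, CauchyNet (U i) (fun d => S d i) := by
  refine ⟨fun hS i => hS.map (gquCont_piGQU_apply i), ?_⟩
  rintro hS A ⟨-, ⟨i, B, hB, rfl⟩, hBA⟩
  obtain ⟨m, hm⟩ := hS i B hB
  exact ⟨m, fun p q hp hq => hBA (hm p q hp hq)⟩

lemma convNet_piGQU_iff (hU : ∀ i, IsGQU (U i)) {S : D → ∀ i, X i} {c : ∀ i, X i} :
    ConvNet (piGQU U) S c ↔ ∀ i, ConvNet (U i) (fun d => S d i) (c i) := by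
  refine ⟨fun hS i => hS.map (gquCont_piGQU_apply i), fun hS G hG hcG => ?_⟩
  obtain ⟨_, ⟨-, ⟨i, B, hB, rfl⟩, hBA⟩, hAG⟩ := hG c hcG
  obtain ⟨m, hm⟩ := (convNet_iff_forall_mem (hU i)).1 (hS i) B hB
  exact ⟨m, fun n hn => hAG (hBA (hm n hn))⟩

lemma completeGQU_piGQU (hU : ∀ i, IsGQU (U i)) (hcomplete : ∀ i, CompleteGQU (U i)) :
    CompleteGQU (piGQU U) := by
  intro D _ _ _ S hS
  choose c hc using fun i => hcomplete i D _ (cauchyNet_piGQU_iff.1 hS i)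
  exact ⟨c, (convNet_piGQU_iff hU).2 hc⟩

lemma CompleteGQU.of_piGQU [∀ i, Nonempty (X i)] (hU : ∀ i, IsGQU (U i))
    (hcomplete : CompleteGQU (piGQU U)) (i : I) : CompleteGQU (U i) := by
  classical
  intro D _ _ _ T hT
  let base : ∀ j, X j := fun j => Classical.arbitrary (X j)
  have hcauchy : CauchyNet (piGQU U) (fun d => Function.update base i (T d)) := by
    refine cauchyNet_piGQU_iff.2 fun j => ?_
    by_cases hji : j = i
    · subst hji
      simpa only [Function.update_self] using hT
    · simpa only [Function.update_of_ne hji] using cauchyNet_const (hU j) (base j)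
  obtain ⟨c, hc⟩ := hcomplete D _ hcauchy
  exact ⟨c i, by simpa only [Function.update_self] using (convNet_piGQU_iff hU).1 hc i⟩

end Pi

theorem stmt_8 {I : Type} {X : I → Type} [∀ i, Nonempty (X i)]
    (U : ∀ i, Set (Set (X i × X i))) (hU : ∀ i, IsGQU (U i)) :
    CompleteGQU (piGQU U) ↔ ∀ i : I, CompleteGQU (U i) :=
  ⟨fun h => h.of_piGQU hU, completeGQU_piGQU hU⟩
end

section
/- In a compact generalized quasi-uniform space, every net has a cluster point; consequently, every compact generalized quasi-uniform space is strongly Lebesgue. -/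
open Set

/-!
If a net `S` had no cluster point, every point `c` would have a `μ(U)`-open neighbourhood `G c`
that `S` eventually avoids, from some index `n c` on. Finitely many `G c` cover `X`; beyond a
common upper bound of the corresponding `n c` the net lies in none of them, which is absurd.
-/

theorem CompactGQU.exists_finite_cover {X : Type} {U : Set (Set (X × X))} (hc : CompactGQU U)
    (G : X → Set X) (hG : ∀ c, G c ∈ muU U) (hcG : ∀ c, c ∈ G c) :
    ∃ t : Set X, t.Finite ∧ ⋃₀ (G '' t) = univ := by
  have hcover : ⋃₀ (G '' univ) = univ :=
    eq_univ_of_forall fun c => ⟨G c, mem_image_of_mem G trivial, hcG c⟩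
  obtain ⟨F, hFG, hF, hFcover⟩ := hc (G '' univ) (by rintro _ ⟨c, -, rfl⟩; exact hG c) hcover
  obtain ⟨t, -, ht, htcover⟩ := (exists_subset_image_finite_and (p := fun s => ⋃₀ s = univ)).mp
    ⟨F, hFG, hF, hFcover⟩
  exact ⟨t, ht, htcover⟩

theorem CompactGQU.exists_clusterPtNet {X : Type} {U : Set (Set (X × X))} (hc : CompactGQU U)
    {D : Type} [Preorder D] [IsDirected D (· ≤ ·)] [Nonempty D] (S : D → X) :
    ∃ c, ClusterPtNet U S c := by
  by_contra! hS
  simp only [ClusterPtNet, not_forall, not_exists, not_and] at hS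
  choose G hG hcG n hn using hS
  obtain ⟨t, ht, htcover⟩ := hc.exists_finite_cover G hG hcG
  obtain ⟨M, hM⟩ := (ht.image n).toFinset.exists_le
  obtain ⟨_, ⟨c, hct, rfl⟩, hSM⟩ := htcover ▸ mem_univ (S M)
  exact hn c M (hM _ ((ht.image n).mem_toFinset.mpr (mem_image_of_mem n hct))) hSM

theorem stmt_9_general {X : Type} (U : Set (Set (X × X)))
    (hc : CompactGQU U) :
    (∀ (D : Type) [Preorder D] [IsDirected D (· ≤ ·)] [Nonempty D],
      ∀ S : D → X, ∃ c : X, ClusterPtNet U S c) ∧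
    StronglyLebesgueGQU U :=
  ⟨fun _ _ _ _ S => hc.exists_clusterPtNet S, fun _ _ _ _ S _ => hc.exists_clusterPtNet S⟩

theorem stmt_9 {X : Type} (U : Set (Set (X × X))) (hU : IsGQU U)
    (hc : CompactGQU U) :
    (∀ (D : Type) [Preorder D] [IsDirected D (· ≤ ·)] [Nonempty D],
      ∀ S : D → X, ∃ c : X, ClusterPtNet U S c) ∧
    StronglyLebesgueGQU U :=
  stmt_9_general U hc
end

section
/- In a generalized quasi-uniform space, every G-Cauchy sequence is pseudo-Cauchy; consequently, every strongly Lebesgue generalized quasi-uniform space is weak G-complete. -/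
open Set

theorem stmt_10 {X : Type} (U : Set (Set (X × X))) (hU : IsGQU U) :
    (∀ x : ℕ → X, GCauchySeq U x → PseudoCauchyNet U x) ∧
    (StronglyLebesgueGQU U → WeakGCompleteGQU U) := by
  have key : ∀ x : ℕ → X, GCauchySeq U x → PseudoCauchyNet U x := by
    intro x hx A hA p
    obtain ⟨k, hk⟩ := hx A hA
    exact ⟨max p k, max p k + 1, le_max_left p k, le_trans (le_max_left p k) (Nat.le_succ _),
      Nat.ne_of_lt (Nat.lt_succ_self _), hk _ (le_max_right p k)⟩
  exact ⟨key, fun hSL x hx => hSL ℕ x (key x hx)⟩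
end

section
/- If a generalized quasi-uniform space (X, U) is sequentially Lebesgue and U has a countable base, then (X, U) is weak G-complete. -/
open Set

/-!
If some value of the G-Cauchy sequence `x` recurs infinitely often, it is a cluster point.
Otherwise `x` has finite fibres, hence infinitely many jumps `x n ≠ x (n + 1)`. Enumerating the
countable base as `b 0, b 1, …`, pick jumps `n₀ < n₁ < ⋯` with `(x nₜ, x (nₜ + 1)) ∈ b i` for all
`i ≤ t`, each so late that `x` never again takes a value seen up to the previous jump. The
interleaved sequence `x n₀, x (n₀ + 1), x n₁, x (n₁ + 1), …` is then pseudo-Cauchy with distinct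
terms, and a cluster point of it is one of `x`.
-/

open Filter Function

section ClusterPt

variable {X : Type} {U : Set (Set (X × X))} {x : ℕ → X} {c : X}

theorem clusterPtNet_nat_iff :
    ClusterPtNet U x c ↔ ∀ G ∈ muU U, c ∈ G → ∃ᶠ n in atTop, x n ∈ G := by
  simp only [ClusterPtNet, frequently_atTop]

theorem clusterPtNet_of_infinite_fiber (hc : {n | x n = c}.Infinite) : ClusterPtNet U x c :=
  clusterPtNet_nat_iff.2 fun _ _ hcG =>
    (Nat.frequently_atTop_iff_infinite.2 hc).mono fun _ hn => hn ▸ hcG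

theorem ClusterPtNet.of_comp {φ : ℕ → ℕ} (hφ : Tendsto φ atTop atTop)
    (hc : ClusterPtNet U (x ∘ φ) c) : ClusterPtNet U x c :=
  clusterPtNet_nat_iff.2 fun G hG hcG => hφ.frequently (clusterPtNet_nat_iff.1 hc G hG hcG)

end ClusterPt

theorem frequently_ne_succ_of_tendsto_cofinite {X : Type} {x : ℕ → X}
    (hx : Tendsto x atTop cofinite) : ∃ᶠ n in atTop, x n ≠ x (n + 1) := by
  intro hsucc
  have : Nonempty X := ⟨x 0⟩
  obtain ⟨c, hc⟩ := eventuallyConst_iff_exists_eventuallyEq.1 <| eventuallyConst_atTop_nat.2 <|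
    eventually_atTop.1 (hsucc.mono fun n hn => (not_not.1 hn).symm)
  obtain ⟨n, hnc, hn⟩ := (hc.and (hx.eventually (Set.finite_singleton c).compl_mem_cofinite)).exists
  exact hn hnc

theorem exists_seq_of_frequently_of_eventually {P R : ℕ → ℕ → Prop}
    (hP : ∀ t, ∃ᶠ n in atTop, P t n) (hR : ∀ m, ∀ᶠ n in atTop, R m n) :
    ∃ φ : ℕ → ℕ, ∀ t, P t (φ t) ∧ R (φ t) (φ (t + 1)) := by
  choose next hnext using fun t m => ((hP t).and_eventually (hR m)).exists
  let φ : ℕ → ℕ := fun t => Nat.rec (hP 0).exists.choose (fun t m => next (t + 1) m) t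
  refine ⟨φ, fun t => ⟨?_, (hnext (t + 1) (φ t)).2⟩⟩
  cases t with
  | zero => exact (hP 0).exists.choose_spec
  | succ t => exact (hnext (t + 1) (φ t)).1

def withSuccs (φ : ℕ → ℕ) (k : ℕ) : ℕ :=
  φ (k / 2) + k % 2

@[simp]
theorem withSuccs_two_mul (φ : ℕ → ℕ) (t : ℕ) : withSuccs φ (2 * t) = φ t := by
  simp [withSuccs]

@[simp]
theorem withSuccs_two_mul_add_one (φ : ℕ → ℕ) (t : ℕ) : withSuccs φ (2 * t + 1) = φ t + 1 := by
  simp [withSuccs, Nat.add_div]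

section WithSuccs

variable {φ : ℕ → ℕ}

theorem strictMono_withSuccs (hφ : ∀ t, φ t + 1 < φ (t + 1)) : StrictMono (withSuccs φ) := by
  refine strictMono_nat_of_lt_succ fun k => ?_
  obtain ⟨t, rfl | rfl⟩ := Nat.even_or_odd' k
  · simp
  · simpa [show 2 * t + 1 + 1 = 2 * (t + 1) by ring] using hφ t

variable {X : Type} {x : ℕ → X}

theorem injective_comp_withSuccs (hφ : ∀ t, φ t + 1 < φ (t + 1))
    (hjump : ∀ t, x (φ t) ≠ x (φ t + 1))
    (hnew : ∀ t, ∀ q ≥ φ (t + 1), ∀ j ≤ φ t + 1, x q ≠ x j) :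
    Injective (x ∘ withSuccs φ) := by
  have hmono : Monotone φ := (strictMono_nat_of_lt_succ fun t => (hφ t).trans' (by omega)).monotone
  refine Injective.of_lt_imp_ne fun k l hkl => ?_
  simp only [comp_apply, withSuccs]
  rcases (Nat.div_le_div_right (c := 2) hkl.le).eq_or_lt with hhalf | hhalf
  · rw [hhalf, show k % 2 = 0 by omega, show l % 2 = 1 by omega, add_zero]
    exact hjump _
  · refine (hnew (k / 2) _ ((hmono hhalf).trans (Nat.le_add_right _ _)) _ ?_).symm
    have := Nat.mod_lt k two_pos
    omega

theorem pseudoCauchyNet_comp_withSuccs {U : Set (Set (X × X))} {b : ℕ → Set (X × X)}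
    (hb : ∀ A ∈ U, ∃ i, b i ⊆ A) (hpair : ∀ t, ∀ i ≤ t, (x (φ t), x (φ t + 1)) ∈ b i) :
    PseudoCauchyNet U (x ∘ withSuccs φ) := by
  intro A hA p
  obtain ⟨i, hi⟩ := hb A hA
  refine ⟨2 * max i p, 2 * max i p + 1, by omega, by omega, by omega, ?_⟩
  simpa using hi (hpair _ i (le_max_left i p))

end WithSuccs

theorem exists_pseudoCauchy_distinct_subseq {X : Type} {U : Set (Set (X × X))}
    {b : ℕ → Set (X × X)} (hbU : ∀ i, b i ∈ U) (hb : ∀ A ∈ U, ∃ i, b i ⊆ A) {x : ℕ → X}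
    (hx : GCauchySeq U x) (hfin : Tendsto x atTop cofinite) :
    ∃ ψ : ℕ → ℕ, StrictMono ψ ∧ PseudoCauchyNet U (x ∘ ψ) ∧ DistinctTerms (x ∘ ψ) := by
  have hjumps : ∀ t, ∃ᶠ n in atTop, x n ≠ x (n + 1) ∧ ∀ i ≤ t, (x n, x (n + 1)) ∈ b i :=
    fun t => (frequently_ne_succ_of_tendsto_cofinite hfin).and_eventually <|
      (eventually_all_finite (Set.finite_Iic t)).2 fun i _ => eventually_atTop.2 (hx (b i) (hbU i))
  have hfresh : ∀ m, ∀ᶠ n in atTop, m + 1 < n ∧ ∀ q ≥ n, ∀ j ≤ m + 1, x q ≠ x j :=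
    fun m => (eventually_gt_atTop (m + 1)).and <| eventually_forall_ge_atTop.2 <|
      (eventually_all_finite (Set.finite_Iic (m + 1))).2 fun j _ =>
        hfin.eventually (Set.finite_singleton (x j)).compl_mem_cofinite
  obtain ⟨φ, hφ⟩ := exists_seq_of_frequently_of_eventually hjumps hfresh
  have hgap : ∀ t, φ t + 1 < φ (t + 1) := fun t => (hφ t).2.1
  refine ⟨withSuccs φ, strictMono_withSuccs hgap,
    pseudoCauchyNet_comp_withSuccs hb fun t => (hφ t).1.2,
    fun _ _ => (injective_comp_withSuccs hgap (fun t => (hφ t).1.1) fun t => (hφ t).2.2).ne⟩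

theorem stmt_11_general {X : Type} (U : Set (Set (X × X)))
    (B : Set (Set (X × X))) (hB : IsGQUBaseOf U B) (hcnt : B.Countable)
    (hseq : SeqLebesgueGQU U) : WeakGCompleteGQU U := by
  intro x hx
  by_cases hrep : ∃ c, {n | x n = c}.Infinite
  · obtain ⟨c, hc⟩ := hrep
    exact ⟨c, clusterPtNet_of_infinite_fiber hc⟩
  simp only [not_exists, Set.not_infinite] at hrep
  have hfin : Tendsto x atTop cofinite := by
    rw [← Nat.cofinite_eq_atTop]
    exact Tendsto.cofinite_of_finite_preimage_singleton hrep
  obtain ⟨b, hbB⟩ := hcnt.exists_eq_range hB.1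
  subst hbB
  obtain ⟨ψ, hψ, hpc, hdist⟩ := exists_pseudoCauchy_distinct_subseq
    (fun i => hB.2.1 (Set.mem_range_self i)) (fun A hA => by simpa using hB.2.2 A hA) hx hfin
  obtain ⟨c, hc⟩ := hseq _ hpc hdist
  exact ⟨c, hc.of_comp hψ.tendsto_atTop⟩

theorem stmt_11 {X : Type} (U : Set (Set (X × X))) (hU : IsGQU U)
    (B : Set (Set (X × X))) (hB : IsGQUBaseOf U B) (hcnt : B.Countable)
    (hseq : SeqLebesgueGQU U) : WeakGCompleteGQU U :=
  stmt_11_general U B hB hcnt hseq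
end

section
/- Let ℤ be endowed with the generalized quasi-uniformity U generated by the discrete metric (i.e., U consists of all supersets of the diagonal Δ(ℤ)). Then (ℤ, U) is Lebesgue but not strongly Lebesgue: the sequence 1,1,2,2,3,3,… is pseudo-Cauchy but has no cluster point. -/
open Set

/-!
In the discrete g-quasi-uniformity the diagonal is an entourage, so every set is open. Hence a
net is pseudo-Cauchy iff it repeats a value beyond every index (so no pseudo-Cauchy net has
distinct terms, and the space is Lebesgue), and `c` is a cluster point iff the net takes the
value `c` frequently, which `1, 1, 2, 2, 3, 3, …` does for no `c`.
-/

/-- The g-quasi-uniformity generated by the discrete metric. -/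
def discreteGQU (X : Type) : Set (Set (X × X)) :=
  {A | ∀ x : X, (x, x) ∈ A}

section Discrete

variable {X : Type}

theorem id_mem_discreteGQU : SetRel.id ∈ discreteGQU X := fun _ => SetRel.mem_id.2 rfl

theorem isGQU_discreteGQU : IsGQU (discreteGQU X) := by
  refine ⟨⟨univ, fun _ => trivial⟩, fun A hA => hA, fun A hA B hAB x => hAB (hA x),
    fun A hA => ⟨SetRel.id, id_mem_discreteGQU, ?_⟩⟩
  rintro ⟨x, y⟩ ⟨z, hxz, hzy⟩
  obtain rfl : x = y := hxz.trans hzy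
  exact hA x

theorem mem_muU_discreteGQU (G : Set X) : G ∈ muU (discreteGQU X) := by
  intro x hx
  refine ⟨SetRel.id, id_mem_discreteGQU, ?_⟩
  rintro y (rfl : x = y)
  exact hx

variable {D : Type} [Preorder D]

theorem pseudoCauchyNet_discreteGQU_iff {S : D → X} :
    PseudoCauchyNet (discreteGQU X) S ↔
      ∀ p : D, ∃ m n : D, p ≤ m ∧ p ≤ n ∧ m ≠ n ∧ S m = S n := by
  refine ⟨fun hS p => hS SetRel.id id_mem_discreteGQU p, ?_⟩
  intro hS A hA p
  obtain ⟨m, n, hpm, hpn, hmn, hSmn⟩ := hS p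
  exact ⟨m, n, hpm, hpn, hmn, hSmn ▸ hA (S n)⟩

theorem clusterPtNet_discreteGQU_iff {S : D → X} {c : X} :
    ClusterPtNet (discreteGQU X) S c ↔ ∀ n : D, ∃ m : D, n ≤ m ∧ S m = c :=
  ⟨fun hc => hc {c} (mem_muU_discreteGQU _) rfl,
    fun hc _ _ hcG n => (hc n).imp fun _ ⟨hnm, hm⟩ => ⟨hnm, hm ▸ hcG⟩⟩

theorem PseudoCauchyNet.not_distinctTerms [Nonempty D] {S : D → X}
    (hS : PseudoCauchyNet (discreteGQU X) S) : ¬ DistinctTerms S := by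
  intro hd
  obtain ⟨m, n, -, -, hmn, hSmn⟩ := pseudoCauchyNet_discreteGQU_iff.1 hS (Classical.arbitrary D)
  exact hd m n hmn hSmn

theorem lebesgueGQU_discreteGQU : LebesgueGQU (discreteGQU X) :=
  fun _ _ _ _ _ hS hd => absurd hd hS.not_distinctTerms

end Discrete

def doubledSucc (n : ℕ) : ℤ := (n / 2 : ℕ) + 1

theorem pseudoCauchyNet_doubledSucc : PseudoCauchyNet (discreteGQU ℤ) doubledSucc :=
  pseudoCauchyNet_discreteGQU_iff.2 fun p =>
    ⟨2 * p, 2 * p + 1, by omega, by omega, by omega, by simp only [doubledSucc]; omega⟩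

theorem not_clusterPtNet_doubledSucc (c : ℤ) :
    ¬ ClusterPtNet (discreteGQU ℤ) doubledSucc c := by
  rw [clusterPtNet_discreteGQU_iff]
  intro hc
  obtain ⟨m, hm, hmc⟩ := hc (2 * c.toNat)
  simp only [doubledSucc] at hmc
  omega

theorem stmt_12 :
    IsGQU {A : Set (ℤ × ℤ) | ∀ x : ℤ, (x, x) ∈ A} ∧
    LebesgueGQU {A : Set (ℤ × ℤ) | ∀ x : ℤ, (x, x) ∈ A} ∧
    PseudoCauchyNet {A : Set (ℤ × ℤ) | ∀ x : ℤ, (x, x) ∈ A}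
      (fun n : ℕ => (n / 2 : ℕ) + 1 : ℕ → ℤ) ∧
    (¬ ∃ c : ℤ, ClusterPtNet {A : Set (ℤ × ℤ) | ∀ x : ℤ, (x, x) ∈ A}
      (fun n : ℕ => (n / 2 : ℕ) + 1 : ℕ → ℤ) c) ∧
    ¬ StronglyLebesgueGQU {A : Set (ℤ × ℤ) | ∀ x : ℤ, (x, x) ∈ A} := by
  have hnoClusterPt : ¬ ∃ c, ClusterPtNet (discreteGQU ℤ) doubledSucc c :=
    fun ⟨c, hc⟩ => not_clusterPtNet_doubledSucc c hc
  exact ⟨isGQU_discreteGQU, lebesgueGQU_discreteGQU, pseudoCauchyNet_doubledSucc,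
    hnoClusterPt, fun h => hnoClusterPt (h ℕ doubledSucc pseudoCauchyNet_doubledSucc)⟩
end

section
/- Let (X, U) be the product generalized quasi-uniform space of a family {(X_i, U_i) : i ∈ I}. A net (R_n)_{n∈D} in X is pseudo-Cauchy if and only if for each i ∈ I the net (π_i(R_n))_{n∈D} is pseudo-Cauchy in (X_i, U_i). -/
open Set

theorem pseudoCauchyNet_genGQU_iff {X D : Type} [Preorder D] (B : Set (Set (X × X)))
    (S : D → X) : PseudoCauchyNet (genGQU B) S ↔ PseudoCauchyNet B S := by
  constructor
  · intro h b hb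
    exact h b ⟨b, hb, subset_rfl⟩
  · rintro h A ⟨b, hb, hbA⟩ p
    obtain ⟨m, n, hm, hn, hmn, hmem⟩ := h b hb p
    exact ⟨m, n, hm, hn, hmn, hbA hmem⟩

theorem pseudoCauchyNet_piBase_iff {I D : Type} {X : I → Type} [Preorder D]
    (U : ∀ i, Set (Set (X i × X i))) (R : D → ∀ i, X i) :
    PseudoCauchyNet (piBase U) R ↔ ∀ i, PseudoCauchyNet (U i) (fun n => R n i) := by
  constructor
  · intro h i A hA
    exact h _ ⟨i, A, hA, rfl⟩
  · rintro h _ ⟨i, A, hA, rfl⟩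
    exact h i A hA

theorem stmt_13_general {I : Type} {X : I → Type}
    (U : ∀ i, Set (Set (X i × X i)))
    (D : Type) [Preorder D]
    (R : D → ∀ i, X i) :
    PseudoCauchyNet (piGQU U) R ↔ ∀ i : I, PseudoCauchyNet (U i) (fun n => R n i) :=
  (pseudoCauchyNet_genGQU_iff _ R).trans (pseudoCauchyNet_piBase_iff U R)

theorem stmt_13 {I : Type} {X : I → Type}
    (U : ∀ i, Set (Set (X i × X i))) (hU : ∀ i, IsGQU (U i))
    (D : Type) [Preorder D] [IsDirected D (· ≤ ·)] [Nonempty D]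
    (R : D → ∀ i, X i) :
    PseudoCauchyNet (piGQU U) R ↔ ∀ i : I, PseudoCauchyNet (U i) (fun n => R n i) :=
  stmt_13_general U D R
end

section
/- Let (X, U) be the product generalized quasi-uniform space of a family {(X_i, U_i) : i ∈ I} with each X_i nonempty. Then (X, U) is strongly Lebesgue if and only if each (X_i, U_i) is strongly Lebesgue. -/
open Set

/-!
Since the product base consists of single cylinders `(π_i × π_i)⁻¹(A)`, a net in the product
is pseudo-Cauchy, resp. clusters at `c`, exactly when every coordinate net is pseudo-Cauchy,
resp. clusters at `c i`. A pseudo-Cauchy net in `X i` is lifted to the product as a slice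
through a fixed point, whose other coordinates are constant and hence pseudo-Cauchy.
-/

/-- The neighbourhood consists of the points some ball around which lies in the `A`-ball
around `c`; it is `μ(U)`-open because `U` has square roots. -/
lemma IsGQU.exists_mem_muU_subset_ball {X : Type} {U : Set (Set (X × X))} (hU : IsGQU U)
    {A : Set (X × X)} (hA : A ∈ U) (c : X) :
    ∃ G ∈ muU U, c ∈ G ∧ G ⊆ {y | (c, y) ∈ A} := by
  obtain ⟨_, hrefl, _, hcomp⟩ := hU
  refine ⟨{x | ∃ V ∈ U, {y | (x, y) ∈ V} ⊆ {y | (c, y) ∈ A}}, ?_, ?_, ?_⟩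
  · rintro x ⟨V, hV, hVA⟩
    obtain ⟨W, hW, hWW⟩ := hcomp V hV
    exact ⟨W, hW, fun y hy => ⟨W, hW, fun z hz => hVA (hWW ⟨y, hy, hz⟩)⟩⟩
  · obtain ⟨W, hW, hWW⟩ := hcomp A hA
    exact ⟨W, hW, fun y hy => hWW ⟨c, hrefl W hW c, hy⟩⟩
  · rintro x ⟨V, hV, hVA⟩
    exact hVA (hrefl V hV x)

lemma PseudoCauchyNet.const {X Y D : Type} [Preorder D] {U : Set (Set (X × X))}
    {V : Set (Set (Y × Y))} {S : D → X} (hS : PseudoCauchyNet U S) (hU : U.Nonempty)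
    (hV : ∀ A ∈ V, ∀ y : Y, (y, y) ∈ A) (y : Y) :
    PseudoCauchyNet V (fun _ : D => y) := by
  intro A hA p
  obtain ⟨m, n, hm, hn, hmn, -⟩ := hS _ hU.some_mem p
  exact ⟨m, n, hm, hn, hmn, hV A hA y⟩

section Pi

variable {I : Type} {X : I → Type} {U : ∀ i, Set (Set (X i × X i))}

lemma preimage_eval_mem_piGQU {i : I} {A : Set (X i × X i)} (hA : A ∈ U i) :
    Prod.map (fun x : ∀ j, X j => x i) (fun x : ∀ j, X j => x i) ⁻¹' A ∈ piGQU U :=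
  ⟨_, ⟨i, A, hA, rfl⟩, subset_rfl⟩

lemma preimage_eval_mem_muU_piGQU {i : I} {G : Set (X i)} (hG : G ∈ muU (U i)) :
    (fun x : ∀ j, X j => x i) ⁻¹' G ∈ muU (piGQU U) := by
  intro x hx
  obtain ⟨A, hA, hball⟩ := hG (x i) hx
  exact ⟨_, preimage_eval_mem_piGQU hA, fun y hy => hball hy⟩

lemma pseudoCauchyNet_piGQU_iff {D : Type} [Preorder D] {S : D → ∀ i, X i} :
    PseudoCauchyNet (piGQU U) S ↔ ∀ i, PseudoCauchyNet (U i) (fun n => S n i) := by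
  constructor
  · intro hS i A hA p
    exact hS _ (preimage_eval_mem_piGQU hA) p
  · rintro hS A ⟨-, ⟨i, Ai, hAi, rfl⟩, hAiA⟩ p
    obtain ⟨m, n, hm, hn, hmn, hSmn⟩ := hS i Ai hAi p
    exact ⟨m, n, hm, hn, hmn, hAiA hSmn⟩

lemma clusterPtNet_piGQU_iff (hU : ∀ i, IsGQU (U i)) {D : Type} [Preorder D]
    {S : D → ∀ i, X i} {c : ∀ i, X i} :
    ClusterPtNet (piGQU U) S c ↔ ∀ i, ClusterPtNet (U i) (fun n => S n i) (c i) := by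
  constructor
  · intro hc i G hG hcG n
    exact hc _ (preimage_eval_mem_muU_piGQU hG) hcG n
  · intro hc G hG hcG n
    obtain ⟨A, ⟨-, ⟨i, Ai, hAi, rfl⟩, hAiA⟩, hball⟩ := hG c hcG
    obtain ⟨G', hG', hcG', hG'Ai⟩ := (hU i).exists_mem_muU_subset_ball hAi (c i)
    obtain ⟨m, hm, hSm⟩ := hc i G' hG' hcG' n
    exact ⟨m, hm, hball (hAiA (hG'Ai hSm))⟩

end Pi

theorem stmt_15 {I : Type} {X : I → Type} [∀ i, Nonempty (X i)]
    (U : ∀ i, Set (Set (X i × X i))) (hU : ∀ i, IsGQU (U i)) :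
    StronglyLebesgueGQU (piGQU U) ↔ ∀ i : I, StronglyLebesgueGQU (U i) := by
  classical
  constructor
  · intro h i D _ _ _ S hS
    let b : ∀ j, X j := fun j => Classical.arbitrary _
    have hT : PseudoCauchyNet (piGQU U) (fun n => Function.update b i (S n)) := by
      refine pseudoCauchyNet_piGQU_iff.2 fun j => ?_
      rcases eq_or_ne j i with rfl | hji
      · simpa using hS
      · simpa [Function.update_of_ne hji] using hS.const (hU i).1 (hU j).2.1 (b j)
    obtain ⟨c, hc⟩ := h D _ hT
    exact ⟨c i, by simpa using (clusterPtNet_piGQU_iff hU).1 hc i⟩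
  · intro h D _ _ _ S hS
    choose c hc using fun i => h i D _ (pseudoCauchyNet_piGQU_iff.1 hS i)
    exact ⟨c, (clusterPtNet_piGQU_iff hU).2 hc⟩
end

section
/- Let (X, U) be the product generalized quasi-uniform space of a family {(X_i, U_i) : i ∈ I} with each X_i nonempty. If (X, U) is Lebesgue, then each (X_i, U_i) is Lebesgue. -/
open Set

/-! Embed `X i` in the product as the slice through a fixed point `c₀`. A pseudo-Cauchy net with
distinct terms in `X i` stays one in the slice, and a cluster point of its image projects to a
cluster point of the original net, because preimages under the projection of `μ(U i)`-open sets
are `μ`-open in the product. -/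

section Product

variable {I : Type} {X : I → Type} {U : ∀ i, Set (Set (X i × X i))}

lemma ClusterPtNet.eval_piGQU {D : Type} [Preorder D] {T : D → ∀ j, X j} {c : ∀ j, X j}
    (hc : ClusterPtNet (piGQU U) T c) (i : I) :
    ClusterPtNet (U i) (fun n => T n i) (c i) :=
  fun _ hG hcG n => hc _ (preimage_eval_mem_muU_piGQU hG) hcG n

/-- Off the coordinate `i` the net is constant, so reflexivity of the `U j` makes every basic
entourage through `j ≠ i` hold trivially. -/
lemma PseudoCauchyNet.update_piGQU [DecidableEq I] {D : Type} [Preorder D]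
    (hU : ∀ j, IsGQU (U j)) (c : ∀ j, X j) {i : I} {S : D → X i}
    (hS : PseudoCauchyNet (U i) S) :
    PseudoCauchyNet (piGQU U) (fun n => Function.update c i (S n)) := by
  rintro A ⟨_, ⟨j, B, hB, rfl⟩, hBA⟩ p
  by_cases hji : j = i
  · subst hji
    obtain ⟨m, n, hm, hn, hmn, hS⟩ := hS B hB p
    exact ⟨m, n, hm, hn, hmn, hBA (by simpa using hS)⟩
  · obtain ⟨B', hB'⟩ := (hU i).1
    obtain ⟨m, n, hm, hn, hmn, -⟩ := hS B' hB' p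
    refine ⟨m, n, hm, hn, hmn, hBA ?_⟩
    simpa [Function.update_of_ne hji] using (hU j).2.1 B hB (c j)

lemma DistinctTerms.update [DecidableEq I] {D : Type} (c : ∀ j, X j) {i : I} {S : D → X i}
    (hS : DistinctTerms S) : DistinctTerms (fun n => Function.update c i (S n)) :=
  fun m n hmn heq => hS m n hmn (Function.update_injective c i heq)

end Product

theorem stmt_16 {I : Type} {X : I → Type} [∀ i, Nonempty (X i)]
    (U : ∀ i, Set (Set (X i × X i))) (hU : ∀ i, IsGQU (U i))
    (h : LebesgueGQU (piGQU U)) : ∀ i : I, LebesgueGQU (U i) := by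
  classical
  intro i D _ _ _ S hPC hDT
  let c₀ : ∀ j, X j := fun j => Classical.arbitrary (X j)
  obtain ⟨c, hc⟩ := h D (fun n => Function.update c₀ i (S n))
    (hPC.update_piGQU hU c₀) (hDT.update c₀)
  exact ⟨c i, by simpa using hc.eval_piGQU i⟩
end
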